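/- If H is a q-Dress group and N ⊴ H, then H/N is a q-Dress group. -/

import Mathlib

/-- `N` is `O^q(H)`: the smallest normal subgroup of `H` whose quotient is a `q`-group. -/
def IsOUpper (q : ℕ) {H : Type*} [Group H] (N : Subgroup H) : Prop :=
  ∃ hN : N.Normal,
    (letI := hN; IsPGroup q (H ⧸ N)) ∧
      ∀ M : Subgroup H, ∀ hM : M.Normal, (letI := hM; IsPGroup q (H ⧸ M)) → N ≤ M

/-- `N` is `O_r(H)`: the largest normal `r`-subgroup of `H`. -/
def IsOLower (r : ℕ) {H : Type*} [Group H] (N : Subgroup H) : Prop :=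
  N.Normal ∧ IsPGroup r N ∧ ∀ M : Subgroup H, M.Normal → IsPGroup r M → M ≤ N

/-- `H` is `r`-hypoelementary: `H / O_r(H)` is cyclic. -/
def IsRHypoelementary (r : ℕ) (H : Type*) [Group H] : Prop :=
  ∃ N : Subgroup H, ∃ hN : IsOLower r N, (letI := hN.1; IsCyclic (H ⧸ N))

/-- `H` is `q`-Dress (relative to the prime `p`): `O^q(H)` is `p`-hypoelementary. -/
def IsQDress (p q : ℕ) (H : Type*) [Group H] : Prop :=
  ∃ N : Subgroup H, IsOUpper q N ∧ IsRHypoelementary p N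


/-!
A surjection `f : G → G'` carries `O^q(G)` onto `O^q(G')`: `G' / f(O^q(G))` is an image of the
`q`-group `G / O^q(G)`, and conversely `G' / M` being a `q`-group makes `G / f⁻¹(M)` one, so
`O^q(G) ≤ f⁻¹(M)`. Moreover `p`-hypoelementary finite groups pass to images: `f(O_p(G))` is a normal
`p`-subgroup, hence lies in `O_p(G')`, so `G' / O_p(G')` is an image of the cyclic `G / O_p(G)`.
Applied to `G → G / N` and its restriction `O^q(G) → f(O^q(G))` this gives the theorem.
-/

open Function

section

variable {G G' : Type*} [Group G] [Group G']

lemma IsPGroup.quotient_comap {q : ℕ} {M : Subgroup G'} [M.Normal] (hM : IsPGroup q (G' ⧸ M))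
    (f : G →* G') : IsPGroup q (G ⧸ M.comap f) := by
  refine hM.of_injective (QuotientGroup.map _ M f le_rfl) ?_
  rw [← MonoidHom.ker_eq_bot_iff, QuotientGroup.ker_map, QuotientGroup.map_mk'_self]

lemma exists_isOLower (r : ℕ) (G : Type*) [Group G] [Finite G] :
    ∃ N : Subgroup G, IsOLower r N := by
  classical
  have : Fintype G := Fintype.ofFinite G
  let S : Finset (Subgroup G) := Finset.univ.filter fun M => M.Normal ∧ IsPGroup r M
  have hsup : (S.sup id).Normal ∧ IsPGroup r ↥(S.sup id) := by
    refine Finset.sup_induction (p := fun M : Subgroup G => M.Normal ∧ IsPGroup r M)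
      ⟨inferInstance, IsPGroup.of_bot⟩ ?_ fun M hM => (Finset.mem_filter.mp hM).2
    rintro A ⟨hAn, hAp⟩ B ⟨hBn, hBp⟩
    exact ⟨Subgroup.sup_normal A B, hAp.to_sup_of_normal_right hBp⟩
  exact ⟨S.sup id, hsup.1, hsup.2, fun M hMn hMp =>
    Finset.le_sup (f := id) (Finset.mem_filter.mpr ⟨Finset.mem_univ M, hMn, hMp⟩)⟩

lemma IsOUpper.map {q : ℕ} {K : Subgroup G} (hK : IsOUpper q K) {f : G →* G'}
    (hf : Surjective f) : IsOUpper q (K.map f) := by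
  obtain ⟨hKn, hKq, hKmin⟩ := hK
  have hfKn : (K.map f).Normal := hKn.map f hf
  refine ⟨hfKn, ?_, fun M hMn hMq => ?_⟩
  · exact hKq.of_surjective _ <| QuotientGroup.map_surjective_of_surjective _ _ _
      (QuotientGroup.mk_surjective.comp hf) (K.le_comap_map f)
  · have hK_le : K ≤ M.comap f := hKmin _ (hMn.comap f) (hMq.quotient_comap f)
    exact Subgroup.map_le_iff_le_comap.mpr hK_le

lemma IsRHypoelementary.of_surjective {r : ℕ} [Finite G] (h : IsRHypoelementary r G)
    {f : G →* G'} (hf : Surjective f) : IsRHypoelementary r G' := by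
  have : Finite G' := Finite.of_surjective f hf
  obtain ⟨P, ⟨hPn, hPp, _⟩, hPcyc⟩ := h
  obtain ⟨O, hO⟩ := exists_isOLower r G'
  have := hO.1
  have := hPcyc
  have hP_le : P ≤ O.comap f :=
    Subgroup.map_le_iff_le_comap.mp (hO.2.2 _ (hPn.map f hf) (hPp.map f))
  exact ⟨O, hO, isCyclic_of_surjective _ <| QuotientGroup.map_surjective_of_surjective _ _ _
    (QuotientGroup.mk_surjective.comp hf) hP_le⟩

lemma IsQDress.of_surjective {p q : ℕ} [Finite G] (h : IsQDress p q G) {f : G →* G'}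
    (hf : Surjective f) : IsQDress p q G' := by
  obtain ⟨K, hK, hKhypo⟩ := h
  exact ⟨K.map f, hK.map hf, hKhypo.of_surjective (f.subgroupMap_surjective K)⟩

end

theorem qDress_quotient_general (p q : ℕ)
    (H : Type*) [Group H] [Finite H] (N : Subgroup H) (hN : N.Normal)
    (hH : IsQDress p q H) :
    letI := hN
    IsQDress p q (H ⧸ N) :=
  letI := hN
  hH.of_surjective (QuotientGroup.mk'_surjective N)

/-- Quotients of `q`-Dress finite groups are `q`-Dress. -/
theorem qDress_quotient (p q : ℕ) (hp : p.Prime) (hq : q.Prime)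
    (H : Type*) [Group H] [Finite H] (N : Subgroup H) (hN : N.Normal)
    (hH : IsQDress p q H) :
    letI := hN
    IsQDress p q (H ⧸ N) :=
  qDress_quotient_general p q H N hN hH
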